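/- None of the following presented groups is circularly orderable: G₂ = ⟨x, a | x⁻¹ a x = a⁻¹, a³ = 1⟩, G₅ = ⟨x, a | x⁻¹ a x = a⁻¹, a⁵ = 1⟩, G₆ = ⟨x, a | x⁻¹ a x = a², a⁵ = 1⟩, G₈ = ⟨x, a | x⁻¹ a x = a², a⁷ = 1⟩. -/
import Mathlib

universe u

/-- A group is circularly orderable if it admits a left-invariant circular order cocycle. -/
def IsCircularlyOrderable (G : Type u) [Group G] : Prop :=
  ∃ c : G → G → G → ℤ,
    (∀ g₁ g₂ g₃ : G, c g₁ g₂ g₃ = -1 ∨ c g₁ g₂ g₃ = 0 ∨ c g₁ g₂ g₃ = 1) ∧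
    (∀ g₁ g₂ g₃ : G, c g₁ g₂ g₃ = 0 ↔ g₁ = g₂ ∨ g₁ = g₃ ∨ g₂ = g₃) ∧
    (∀ g₁ g₂ g₃ g₄ : G, c g₂ g₃ g₄ - c g₁ g₃ g₄ + c g₁ g₂ g₄ - c g₁ g₂ g₃ = 0) ∧
    (∀ h g₁ g₂ g₃ : G, c g₁ g₂ g₃ = c (h * g₁) (h * g₂) (h * g₃))

/-- The relators of the group `⟨x, a | x⁻¹ a x = a^e, aⁿ = 1⟩`
(generators: `x = of 0`, `a = of 1`). -/
def knotGroupRels (n : ℕ) (e : ℤ) : Set (FreeGroup (Fin 2)) :=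
  {(FreeGroup.of 0)⁻¹ * FreeGroup.of 1 * FreeGroup.of 0 * (FreeGroup.of 1 ^ e)⁻¹,
   FreeGroup.of 1 ^ n}


/-- Bundled left-invariant circular order. -/
structure CircOrd (G : Type u) [Group G] where
  c : G → G → G → ℤ
  hval : ∀ g₁ g₂ g₃ : G, c g₁ g₂ g₃ = -1 ∨ c g₁ g₂ g₃ = 0 ∨ c g₁ g₂ g₃ = 1
  hzero : ∀ g₁ g₂ g₃ : G, c g₁ g₂ g₃ = 0 ↔ g₁ = g₂ ∨ g₁ = g₃ ∨ g₂ = g₃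
  hcoc : ∀ g₁ g₂ g₃ g₄ : G, c g₂ g₃ g₄ - c g₁ g₃ g₄ + c g₁ g₂ g₄ - c g₁ g₂ g₃ = 0
  hinv : ∀ h g₁ g₂ g₃ : G, c g₁ g₂ g₃ = c (h * g₁) (h * g₂) (h * g₃)

namespace CircOrd

variable {G : Type u} [Group G] (co : CircOrd G)

lemma eq12 (g h : G) : co.c g g h = 0 := (co.hzero g g h).mpr (Or.inl rfl)
lemma eq13 (g h : G) : co.c g h g = 0 := (co.hzero g h g).mpr (Or.inr (Or.inl rfl))
lemma eq23 (g h : G) : co.c h g g = 0 := (co.hzero h g g).mpr (Or.inr (Or.inr rfl))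

lemma swap12 (g h k : G) : co.c h g k = -co.c g h k := by
  have := co.hcoc h g h k
  have h1 := co.eq12 h k; have h2 := co.eq13 h g
  -- c g h k - c h h k + c h g k - c h g h = 0
  rw [h1, h2] at this; omega

lemma cyc (g h k : G) : co.c g h k = co.c h k g := by
  have := co.hcoc g h k g
  have h1 := co.eq13 g k; have h2 := co.eq13 g h
  rw [h1, h2] at this; omega

lemma swap13 (g h k : G) : co.c k h g = -co.c g h k := by
  rw [co.cyc k h g]; exact co.swap12 g h k

lemma star (A q B C : G) : co.c A q B + co.c B q C = co.c A q C - co.c A B C := by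
  have h0 := co.hcoc A q B C
  -- c q B C - c A B C + c A q C - c A q B = 0
  have h1 : co.c q B C = -co.c B q C := co.swap12 B q C
  rw [h1] at h0; omega

lemma abs_le_one (g h k : G) : |co.c g h k| ≤ 1 := by
  rcases co.hval g h k with h' | h' | h' <;> rw [h'] <;> decide

lemma abs_eq_one (g₁ g₂ g₃ : G) (h12 : g₁ ≠ g₂) (h13 : g₁ ≠ g₃) (h23 : g₂ ≠ g₃) :
    co.c g₁ g₂ g₃ = 1 ∨ co.c g₁ g₂ g₃ = -1 := by
  rcases co.hval g₁ g₂ g₃ with h' | h' | h'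
  · exact Or.inr h'
  · rcases (co.hzero g₁ g₂ g₃).mp h' with h | h | h <;> tauto
  · exact Or.inl h'

/-- Winding sum of the `b`-orbit of `p` with cut point `q`. -/
def S (n : ℕ) (b p q : G) : ℤ := ∑ i ∈ Finset.range n, co.c (b ^ i * p) q (b ^ (i + 1) * p)

/-- Reference sum. -/
def Bs (n : ℕ) (b p : G) : ℤ := ∑ i ∈ Finset.range n, co.c p (b ^ i * p) (b ^ (i + 1) * p)

lemma S_eq (m : ℕ) (b p q : G) : co.S m b p q = co.c p q (b ^ m * p) - co.Bs m b p := by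
  induction m with
  | zero => simp [S, Bs, co.eq13]
  | succ m ih =>
      have hstar := co.star p q (b ^ m * p) (b ^ (m + 1) * p)
      simp only [S, Bs, Finset.sum_range_succ] at ih ⊢
      linarith

lemma S_cut (n : ℕ) (b p : G) (hb : b ^ n = 1) (q q' : G) :
    co.S n b p q = co.S n b p q' := by
  rw [co.S_eq, co.S_eq, hb, one_mul, co.eq13, co.eq13]

lemma Bs_abs (n : ℕ) (hn : 2 ≤ n) (b p : G) (hb : b ^ n = 1) :
    |co.Bs n b p| ≤ (n : ℤ) - 2 := by
  have hsub : Finset.Ico 1 (n - 1) ⊆ Finset.range n := by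
    intro x hx
    simp only [Finset.mem_Ico] at hx
    simp only [Finset.mem_range]
    omega
  have hzero' : ∀ x ∈ Finset.range n, x ∉ Finset.Ico 1 (n - 1) →
      co.c p (b ^ x * p) (b ^ (x + 1) * p) = 0 := by
    intro x hx hx'
    simp only [Finset.mem_range] at hx
    simp only [Finset.mem_Ico, not_and_or, not_le, not_lt] at hx'
    rcases hx' with h | h
    · interval_cases x
      simp [co.eq12]
    · have : x = n - 1 := by omega
      subst this
      have : n - 1 + 1 = n := by omega
      rw [this, hb, one_mul, co.eq13]
  have : co.Bs n b p = ∑ i ∈ Finset.Ico 1 (n - 1), co.c p (b ^ i * p) (b ^ (i + 1) * p) :=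
    (Finset.sum_subset hsub hzero').symm
  rw [this]
  calc |∑ i ∈ Finset.Ico 1 (n - 1), co.c p (b ^ i * p) (b ^ (i + 1) * p)|
      ≤ ∑ i ∈ Finset.Ico 1 (n - 1), |co.c p (b ^ i * p) (b ^ (i + 1) * p)| :=
        Finset.abs_sum_le_sum_abs _ _
    _ ≤ ∑ _i ∈ Finset.Ico 1 (n - 1), (1 : ℤ) :=
        Finset.sum_le_sum fun i _ => co.abs_le_one _ _ _
    _ = ((n : ℤ) - 2) := by
        rw [Finset.sum_const, Nat.card_Ico]
        have : n - 1 - 1 = n - 2 := by omega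
        rw [this]
        rw [nsmul_eq_mul, mul_one]; omega

lemma S_abs (n : ℕ) (hn : 2 ≤ n) (b p q : G) (hb : b ^ n = 1) :
    |co.S n b p q| ≤ (n : ℤ) - 2 := by
  rw [co.S_eq, hb, one_mul, co.eq13, zero_sub, abs_neg]
  exact co.Bs_abs n hn b p hb

lemma S_inv (n : ℕ) (b p q : G) (hb : b ^ n = 1) :
    co.S n b⁻¹ p q = -co.S n b p q := by
  rw [S, S, ← Finset.sum_range_reflect, ← Finset.sum_neg_distrib]
  apply Finset.sum_congr rfl
  intro i hi
  simp only [Finset.mem_range] at hi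
  have e1 : (b⁻¹ : G) ^ (n - 1 - i) = b ^ (i + 1) := by
    rw [inv_pow, inv_eq_iff_mul_eq_one, ← pow_add]
    have : n - 1 - i + (i + 1) = n := by omega
    rw [this, hb]
  have e2 : (b⁻¹ : G) ^ (n - 1 - i + 1) = b ^ i := by
    rw [inv_pow, inv_eq_iff_mul_eq_one, ← pow_add]
    have : n - 1 - i + 1 + i = n := by omega
    rw [this, hb]
  rw [e1, e2, co.swap13]

/-- Auxiliary: pairing up a sum over `range (2*n)`. -/
lemma sum_pair (f : ℕ → ℤ) (n : ℕ) :
    ∑ i ∈ Finset.range n, (f (2 * i) + f (2 * i + 1)) = ∑ j ∈ Finset.range (2 * n), f j := by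
  induction n with
  | zero => simp
  | succ n ih =>
      have h2 : 2 * (n + 1) = 2 * n + 1 + 1 := by ring
      rw [Finset.sum_range_succ, ih, h2, Finset.sum_range_succ, Finset.sum_range_succ]
      ring

/-- Cyclic shift of a sum. -/
lemma sum_shift (A : ℕ → ℤ) (n : ℕ) (h : A n = A 0) :
    ∑ i ∈ Finset.range n, A (i + 1) = ∑ i ∈ Finset.range n, A i := by
  have h1 := Finset.sum_range_succ' A n
  have h2 := Finset.sum_range_succ A n
  rw [h2, h] at h1
  omega

lemma S_sq (n : ℕ) (b p q : G) (hb : b ^ n = 1) :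
    co.S n (b * b) p q = 2 * co.S n b p q + n * co.c p (b * p) (b * (b * p)) := by
  classical
  set g : ℕ → ℤ := fun j => co.c (b ^ j * p) q (b ^ (j + 1) * p) with hg
  have hterm : ∀ i : ℕ, co.c ((b * b) ^ i * p) q ((b * b) ^ (i + 1) * p)
      = g (2 * i) + g (2 * i + 1) + co.c p (b * p) (b * (b * p)) := by
    intro i
    have e1 : (b * b) ^ i = b ^ (2 * i) := by rw [← pow_two, ← pow_mul]
    have e2 : (b * b) ^ (i + 1) = b ^ (2 * i + 1 + 1) := by
      rw [← pow_two, ← pow_mul]; ring_nf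
    have hstar := co.star (b ^ (2 * i) * p) q (b ^ (2 * i + 1) * p) (b ^ (2 * i + 1 + 1) * p)
    have hmid : co.c (b ^ (2 * i) * p) (b ^ (2 * i + 1) * p) (b ^ (2 * i + 1 + 1) * p)
        = co.c p (b * p) (b * (b * p)) := by
      have := co.hinv (b ^ (2 * i)) p (b * p) (b * (b * p))
      rw [this]
      congr 1
      · rw [← mul_assoc, ← pow_succ]
      · rw [← mul_assoc, ← mul_assoc, ← pow_succ, ← pow_succ]
    rw [e1, e2]
    simp only [hg]
    rw [← hmid]
    linarith [hstar]
  have : co.S n (b * b) p q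
      = ∑ i ∈ Finset.range n, (g (2 * i) + g (2 * i + 1)) + n * co.c p (b * p) (b * (b * p)) := by
    rw [S, Finset.sum_congr rfl fun i _ => hterm i, Finset.sum_add_distrib]
    simp [mul_comm]
  rw [this, sum_pair]
  have hsplit : ∑ j ∈ Finset.range (2 * n), g j
      = ∑ j ∈ Finset.range n, g j + ∑ j ∈ Finset.range n, g (n + j) := by
    rw [two_mul, Finset.sum_range_add]
  have hper : ∀ j, g (n + j) = g j := by
    intro j
    simp only [hg]
    have e1 : b ^ (n + j) = b ^ j := by rw [pow_add, hb, one_mul]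
    have e2 : b ^ (n + j + 1) = b ^ (j + 1) := by
      rw [add_assoc, pow_add, hb, one_mul]
    rw [e1, e2]
  rw [hsplit, Finset.sum_congr rfl fun j _ => hper j]
  rw [S]
  ring

/-- Basepoint independence of the winding sum. -/
lemma S_base (n : ℕ) (hn : 2 ≤ n) (b p p' q : G) (hb : b ^ n = 1)
    (h1 : p ≠ p') (h2 : b * p ≠ p) (h3 : b * p ≠ p') (h4 : b * p' ≠ p') :
    co.S n b p q = co.S n b p' q := by
  classical
  set α : ℤ := co.c p p' (b * p) with hα
  set β : ℤ := co.c p' (b * p) (b * p') with hβ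
  set A : ℕ → ℤ := fun i => co.c (b ^ i * p) q (b ^ i * p') with hA
  set Bf : ℕ → ℤ := fun i => co.c (b ^ i * p') q (b ^ (i + 1) * p) with hBf
  have hmix1 : ∀ i : ℕ, co.c (b ^ i * p) (b ^ i * p') (b ^ (i + 1) * p) = α := by
    intro i
    rw [hα, co.hinv (b ^ i) p p' (b * p), ← mul_assoc, ← pow_succ]
  have hmix2 : ∀ i : ℕ, co.c (b ^ i * p') (b ^ (i + 1) * p) (b ^ (i + 1) * p') = β := by
    intro i
    rw [hβ, co.hinv (b ^ i) p' (b * p) (b * p'), ← mul_assoc, ← mul_assoc, ← pow_succ]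
  -- W = S p - n α
  have hW1 : ∑ i ∈ Finset.range n, (A i + Bf i) = co.S n b p q - n * α := by
    have : ∀ i : ℕ, A i + Bf i = co.c (b ^ i * p) q (b ^ (i + 1) * p) - α := by
      intro i
      have := co.star (b ^ i * p) q (b ^ i * p') (b ^ (i + 1) * p)
      rw [← hmix1 i]
      simp only [hA, hBf]
      linarith
    rw [Finset.sum_congr rfl fun i _ => this i, Finset.sum_sub_distrib, S]
    simp [mul_comm]
  -- W = S p' - n β  (after cyclic shift of the A-part)
  have hAshift : A n = A 0 := by simp only [hA, hb, one_mul, pow_zero]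
  have hW2 : ∑ i ∈ Finset.range n, (A i + Bf i) = co.S n b p' q - n * β := by
    have hs : ∑ i ∈ Finset.range n, A i = ∑ i ∈ Finset.range n, A (i + 1) :=
      (sum_shift A n hAshift).symm
    have : ∀ i : ℕ, Bf i + A (i + 1) = co.c (b ^ i * p') q (b ^ (i + 1) * p') - β := by
      intro i
      have := co.star (b ^ i * p') q (b ^ (i + 1) * p) (b ^ (i + 1) * p')
      rw [← hmix2 i]
      simp only [hA, hBf]
      linarith
    calc ∑ i ∈ Finset.range n, (A i + Bf i)
        = ∑ i ∈ Finset.range n, A i + ∑ i ∈ Finset.range n, Bf i := Finset.sum_add_distrib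
      _ = ∑ i ∈ Finset.range n, Bf i + ∑ i ∈ Finset.range n, A (i + 1) := by rw [hs]; ring
      _ = ∑ i ∈ Finset.range n, (Bf i + A (i + 1)) := Finset.sum_add_distrib.symm
      _ = ∑ i ∈ Finset.range n, (co.c (b ^ i * p') q (b ^ (i + 1) * p') - β) :=
          Finset.sum_congr rfl fun i _ => this i
      _ = co.S n b p' q - n * β := by
          rw [Finset.sum_sub_distrib, S]; simp [mul_comm]
  have hdiff : co.S n b p q - co.S n b p' q = n * (α - β) := by
    have := hW1.symm.trans hW2
    linarith
  have hαv : α = 1 ∨ α = -1 := co.abs_eq_one _ _ _ h1 (Ne.symm h2) (Ne.symm h3)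
  have hβv : β = 1 ∨ β = -1 := co.abs_eq_one _ _ _ (Ne.symm h3) (Ne.symm h4)
      (fun hh => h1 (mul_left_cancel hh))
  have hS1 := co.S_abs n hn b p q hb
  have hS2 := co.S_abs n hn b p' q hb
  rcases hαv with hα1 | hα1 <;> rcases hβv with hβ1 | hβ1 <;>
    rw [hα1, hβ1] at hdiff <;>
    [skip; skip; skip; skip] <;>
    first
      | linarith
      | (rw [abs_le] at hS1 hS2; push_cast at hdiff ⊢; nlinarith [hS1.1, hS1.2, hS2.1, hS2.2])

lemma conj_pow (a x b : G) (hrel : x⁻¹ * a * x = b) (i : ℕ) :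
    x⁻¹ * a ^ i = b ^ i * x⁻¹ := by
  induction i with
  | zero => simp
  | succ i ih =>
      have hxb : x⁻¹ * a = b * x⁻¹ := by
        rw [← hrel]; group
  -- x⁻¹ a^{i+1} = (x⁻¹ a^i) a = b^i x⁻¹ a = b^i b x⁻¹
      rw [pow_succ, ← mul_assoc, ih, mul_assoc, hxb, pow_succ, ← mul_assoc]

/-- The conjugation step: `S n a 1 q = S n b x⁻¹ (x⁻¹ q)` where `x⁻¹ a x = b`. -/
lemma S_conj (n : ℕ) (a x b q : G) (hrel : x⁻¹ * a * x = b) :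
    co.S n a 1 q = co.S n b x⁻¹ (x⁻¹ * q) := by
  rw [S, S]
  apply Finset.sum_congr rfl
  intro i _
  rw [co.hinv x⁻¹ (a ^ i * 1) q (a ^ (i + 1) * 1)]
  congr 1
  · rw [mul_one, conj_pow a x b hrel]
  · rw [mul_one, conj_pow a x b hrel]

/-- Parity of the winding sum over a free orbit. -/
lemma S_odd (n : ℕ) (hodd : Odd n) (a q : G)
    (hne : ∀ i ∈ Finset.range n, co.c (a ^ i * 1) q (a ^ (i + 1) * 1) ≠ 0) :
    co.S n a 1 q ≠ 0 := by
  intro h0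
  have hmod : co.S n a 1 q % 2 = (∑ i ∈ Finset.range n, (1 : ℤ)) % 2 := by
    rw [S, Finset.sum_int_mod]
    congr 1
    apply Finset.sum_congr rfl
    intro i hi
    rcases co.hval (a ^ i * 1) q (a ^ (i + 1) * 1) with h | h | h
    · rw [h]; decide
    · exact absurd h (hne i hi)
    · rw [h]; decide
  rw [h0, Finset.sum_const, Finset.card_range] at hmod
  simp only [nsmul_eq_mul, mul_one] at hmod
  obtain ⟨k, hk⟩ := hodd
  omega

/-- Main lemma, case `x⁻¹ a x = a⁻¹`. -/
theorem key_neg (co : CircOrd G) (n : ℕ) (hn : 3 ≤ n) (hodd : Odd n) (a x : G) (han : a ^ n = 1)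
    (hrel : x⁻¹ * a * x = a⁻¹) (hdist : ∀ i j, i < n → j < n → i ≠ j → a ^ i ≠ a ^ j)
    (hx : ∀ i, i < n → x ≠ a ^ i) : False := by
  have hbn : (a⁻¹) ^ n = 1 := by rw [inv_pow, han, inv_one]
  have ha1 : a ≠ 1 := by
    have := hdist 1 0 (by omega) (by omega) (by omega); simpa using this
  have hx1 : x ≠ 1 := by have := hx 0 (by omega); simpa using this
  have hainv : a⁻¹ = a ^ (n - 1) := by
    rw [eq_comm, eq_inv_iff_mul_eq_one, ← pow_succ]
    have : n - 1 + 1 = n := by omega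
    rw [this, han]
  -- the chain of equalities
  have e1 : co.S n a 1 x = co.S n a⁻¹ x⁻¹ (x⁻¹ * x) := co.S_conj n a x a⁻¹ x hrel
  rw [inv_mul_cancel] at e1
  have e2 : co.S n a⁻¹ x⁻¹ 1 = co.S n a⁻¹ 1 1 := by
    apply co.S_base n (by omega) a⁻¹ x⁻¹ 1 1 hbn
    · simpa using hx1
    · intro hh
      exact ha1 (by
        have : (a⁻¹ : G) = 1 := mul_right_cancel (hh.trans (one_mul x⁻¹).symm)
        simpa using this)
    · intro hh
      have hxa : a⁻¹ = x := by simpa using mul_eq_one_iff_eq_inv.mp hh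
      exact hx (n - 1) (by omega) (hxa.symm.trans hainv)
    · intro hh
      exact ha1 (by simpa using hh)
  have e3 : co.S n a⁻¹ 1 1 = -co.S n a 1 1 := co.S_inv n a 1 1 han
  have e4 : co.S n a 1 1 = co.S n a 1 x := co.S_cut n a 1 han 1 x
  have hzero : co.S n a 1 x = 0 := by
    have h5 := e1.trans (e2.trans e3)
    rw [e4] at h5
    linarith
  -- parity contradiction
  apply co.S_odd n hodd a x _ hzero
  intro i hi
  simp only [Finset.mem_range] at hi
  intro hzero'
  have hii : a ^ i ≠ a ^ (i + 1) := by
    rcases Nat.lt_or_ge (i + 1) n with h | h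
    · exact hdist i (i + 1) hi h (by omega)
    · have : i + 1 = n := by omega
      rw [this, han]
      have := hdist i 0 hi (by omega) (by omega)
      simpa using this
  have hxi : x ≠ a ^ i := hx i hi
  have hxi1 : x ≠ a ^ (i + 1) := by
    rcases Nat.lt_or_ge (i + 1) n with h | h
    · exact hx (i + 1) h
    · have : i + 1 = n := by omega
      rw [this, han]
      exact hx1
  rcases (co.hzero _ _ _).mp hzero' with h | h | h
  · rw [mul_one] at h; exact hxi h.symm
  · rw [mul_one, mul_one] at h; exact hii h
  · rw [mul_one] at h; exact hxi1 h

/-- Main lemma, case `x⁻¹ a x = a²`. -/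
theorem key_two (co : CircOrd G) (n : ℕ) (hn : 3 ≤ n) (a x : G) (han : a ^ n = 1)
    (hrel : x⁻¹ * a * x = a * a) (hdist : ∀ i j, i < n → j < n → i ≠ j → a ^ i ≠ a ^ j)
    (hx : ∀ i, i < n → x ≠ a ^ i) : False := by
  have hbn : (a * a) ^ n = 1 := by
    rw [← pow_two, ← pow_mul, mul_comm, pow_mul, han, one_pow]
  have ha1 : a ≠ 1 := by
    have := hdist 1 0 (by omega) (by omega) (by omega); simpa using this
  have ha2 : a * a ≠ 1 := by
    have := hdist 2 0 (by omega) (by omega) (by omega)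
    simpa [pow_two] using this
  have hx1 : x ≠ 1 := by have := hx 0 (by omega); simpa using this
  have e1 : co.S n a 1 1 = co.S n (a * a) x⁻¹ (x⁻¹ * 1) := co.S_conj n a x (a * a) 1 hrel
  rw [mul_one] at e1
  have e1' : co.S n (a * a) x⁻¹ x⁻¹ = co.S n (a * a) x⁻¹ 1 := co.S_cut n (a * a) x⁻¹ hbn x⁻¹ 1
  have e2 : co.S n (a * a) x⁻¹ 1 = co.S n (a * a) 1 1 := by
    apply co.S_base n (by omega) (a * a) x⁻¹ 1 1 hbn
    · simpa using hx1
    · intro hh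
      exact ha2 (mul_right_cancel (hh.trans (one_mul x⁻¹).symm))
    · intro hh
      have hxa : a * a = x := by simpa using mul_eq_one_iff_eq_inv.mp hh
      exact hx 2 (by omega) (by rw [← hxa, pow_two])
    · intro hh
      exact ha2 (by simpa using hh)
  have e3 : co.S n (a * a) 1 1 = 2 * co.S n a 1 1 + n * co.c 1 (a * 1) (a * (a * 1)) :=
    co.S_sq n a 1 1 han
  set γ : ℤ := co.c 1 (a * 1) (a * (a * 1)) with hγ
  have hγv : γ = 1 ∨ γ = -1 := by
    apply co.abs_eq_one
    · rw [mul_one]; exact fun hh => ha1 hh.symm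
    · rw [mul_one]; exact fun hh => ha2 hh.symm
    · rw [mul_one]
      intro hh
      have : a * a = a * 1 := by rw [mul_one]; exact hh.symm
      exact ha1 (mul_left_cancel this)
  have hS : co.S n a 1 1 = -(n : ℤ) * γ := by
    have := e1.trans (e1'.trans (e2.trans e3))
    linarith
  have habs := co.S_abs n (by omega) a 1 1 han
  rw [hS] at habs
  have : |(-(n : ℤ) * γ)| = n := by
    rcases hγv with h | h <;> rw [h] <;> simp [abs_of_nonneg]
  rw [this] at habs
  omega

end CircOrd


/-- `Equiv.addLeft` as a monoid hom. -/
def addLeftHom (n : ℕ) : Multiplicative (ZMod n) →* Equiv.Perm (ZMod n) where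
  toFun z := Equiv.addLeft z.toAdd
  map_one' := by ext w; simp
  map_mul' x y := by ext w; simp [add_assoc]

/-- The two generator images. -/
def knotPermMap (n : ℕ) (w : (ZMod n)ˣ) : Fin 2 → Equiv.Perm (ZMod n) :=
  ![MulAction.toPermHom (ZMod n)ˣ (ZMod n) w, addLeftHom n (Multiplicative.ofAdd 1)]

lemma tau_pow (n : ℕ) (i : ℕ) :
    (addLeftHom n (Multiplicative.ofAdd 1)) ^ i = Equiv.addLeft ((i : ZMod n)) := by
  rw [← map_pow]
  have : (Multiplicative.ofAdd (1 : ZMod n)) ^ i = Multiplicative.ofAdd ((i : ZMod n)) := by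
    rw [← ofAdd_nsmul]
    congr 1
    simp [nsmul_eq_mul]
  rw [this]
  rfl

lemma tau_zpow (n : ℕ) (e : ℤ) :
    (addLeftHom n (Multiplicative.ofAdd 1)) ^ e = Equiv.addLeft ((e : ZMod n)) := by
  rw [← map_zpow]
  have : (Multiplicative.ofAdd (1 : ZMod n)) ^ e = Multiplicative.ofAdd ((e : ZMod n)) := by
    rw [← ofAdd_zsmul]
    congr 1
    simp [zsmul_eq_mul]
  rw [this]
  rfl

lemma knot_rels_map (n : ℕ) (e : ℤ) (w : (ZMod n)ˣ)
    (hwe : ((w⁻¹ : (ZMod n)ˣ) : ZMod n) = ((e : ℤ) : ZMod n)) :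
    ∀ r ∈ knotGroupRels n e, FreeGroup.lift (knotPermMap n w) r = 1 := by
  intro r hr
  rcases hr with hr | hr
  · subst hr
    rw [map_mul, map_mul, map_mul, map_inv, map_inv, map_zpow,
      FreeGroup.lift_apply_of, FreeGroup.lift_apply_of]
    rw [mul_inv_eq_one]
    show (knotPermMap n w 0)⁻¹ * knotPermMap n w 1 * knotPermMap n w 0
        = knotPermMap n w 1 ^ e
    have h0 : knotPermMap n w 0 = MulAction.toPermHom (ZMod n)ˣ (ZMod n) w := rfl
    have h1 : knotPermMap n w 1 = addLeftHom n (Multiplicative.ofAdd 1) := rfl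
    rw [h0, h1, tau_zpow, ← map_inv]
    ext z
    simp only [Equiv.Perm.mul_apply, MulAction.toPermHom_apply, MulAction.toPerm_apply]
    show (w⁻¹ : (ZMod n)ˣ) • ((1 : ZMod n) + w • z) = (e : ZMod n) + z
    rw [Units.smul_def, Units.smul_def, smul_eq_mul, smul_eq_mul, mul_add, mul_one,
      ← mul_assoc]
    norm_cast
    rw [inv_mul_cancel, Units.val_one, one_mul, hwe]
  · rw [Set.mem_singleton_iff] at hr
    subst hr
    rw [map_pow, FreeGroup.lift_apply_of]
    show (addLeftHom n (Multiplicative.ofAdd 1)) ^ n = 1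
    rw [tau_pow, ZMod.natCast_self]
    ext z; simp

theorem presented_facts (n : ℕ) [NeZero n] (e : ℤ) (w : (ZMod n)ˣ)
    (hwe : ((w⁻¹ : (ZMod n)ˣ) : ZMod n) = ((e : ℤ) : ZMod n))
    (hw1 : ((w : (ZMod n)ˣ) : ZMod n) ≠ 1) :
    ∃ a x : PresentedGroup (knotGroupRels n e),
      a ^ n = 1 ∧ x⁻¹ * a * x = a ^ e ∧
      (∀ i j, i < n → j < n → i ≠ j → a ^ i ≠ a ^ j) ∧ (∀ i, i < n → x ≠ a ^ i) := by
  set a : PresentedGroup (knotGroupRels n e) := PresentedGroup.of 1 with ha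
  set x : PresentedGroup (knotGroupRels n e) := PresentedGroup.of 0 with hx
  have hmk : ∀ r ∈ knotGroupRels n e, PresentedGroup.mk (knotGroupRels n e) r = 1 := by
    intro r hr
    exact (QuotientGroup.eq_one_iff _).mpr (Subgroup.subset_normalClosure hr)
  have han : a ^ n = 1 := by
    have := hmk _ (Or.inr rfl)
    rw [map_pow] at this
    exact this
  have hrel : x⁻¹ * a * x = a ^ e := by
    have := hmk _ (Or.inl rfl)
    rw [map_mul, map_mul, map_mul, map_inv, map_inv, map_zpow] at this
    exact mul_inv_eq_one.mp this
  set φ := PresentedGroup.toGroup (knot_rels_map n e w hwe) with hφ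
  have hφa : φ a = addLeftHom n (Multiplicative.ofAdd 1) := PresentedGroup.toGroup.of _
  have hφx : φ x = MulAction.toPermHom (ZMod n)ˣ (ZMod n) w := PresentedGroup.toGroup.of _
  have hcast : ∀ i j : ℕ, i < n → j < n → (i : ZMod n) = (j : ZMod n) → i = j := by
    intro i j hi hj hij
    have := congrArg ZMod.val hij
    rwa [ZMod.val_cast_of_lt hi, ZMod.val_cast_of_lt hj] at this
  refine ⟨a, x, han, hrel, ?_, ?_⟩
  · intro i j hi hj hij hcontra
    have h2 := congrArg φ hcontra
    rw [map_pow, map_pow, hφa, tau_pow, tau_pow] at h2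
    have h3 : ((i : ZMod n)) + 0 = ((j : ZMod n)) + 0 := by
      exact congrFun (congrArg (fun (σ : Equiv.Perm (ZMod n)) => σ.toFun) h2) 0
    rw [add_zero, add_zero] at h3
    exact hij (hcast i j hi hj h3)
  · intro i hi hcontra
    have h2 := congrArg φ hcontra
    rw [map_pow, hφa, hφx, tau_pow] at h2
    have h30 : (w : (ZMod n)ˣ) • (0 : ZMod n) = ((i : ZMod n)) + 0 :=
      congrFun (congrArg (fun (σ : Equiv.Perm (ZMod n)) => σ.toFun) h2) 0
    have h31 : (w : (ZMod n)ˣ) • (1 : ZMod n) = ((i : ZMod n)) + 1 :=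
      congrFun (congrArg (fun (σ : Equiv.Perm (ZMod n)) => σ.toFun) h2) 1
    rw [smul_zero, add_zero] at h30
    rw [Units.smul_def, smul_eq_mul, mul_one, ← h30, zero_add] at h31
    exact hw1 h31


/-- Non-circular-orderability, case `e = -1`. -/
theorem not_co_neg (n : ℕ) [NeZero n] (hn : 3 ≤ n) (hodd : Odd n) (w : (ZMod n)ˣ)
    (hwe : ((w⁻¹ : (ZMod n)ˣ) : ZMod n) = ((-1 : ℤ) : ZMod n))
    (hw1 : ((w : (ZMod n)ˣ) : ZMod n) ≠ 1) :
    ¬ IsCircularlyOrderable (PresentedGroup (knotGroupRels n (-1))) := by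
  rintro ⟨c, h1, h2, h3, h4⟩
  obtain ⟨a, x, han, hrel, hdist, hx⟩ := presented_facts n (-1) w hwe hw1
  rw [zpow_neg, zpow_one] at hrel
  exact CircOrd.key_neg ⟨c, h1, h2, h3, h4⟩ n hn hodd a x han hrel hdist hx

/-- Non-circular-orderability, case `e = 2`. -/
theorem not_co_two (n : ℕ) [NeZero n] (hn : 3 ≤ n) (w : (ZMod n)ˣ)
    (hwe : ((w⁻¹ : (ZMod n)ˣ) : ZMod n) = ((2 : ℤ) : ZMod n))
    (hw1 : ((w : (ZMod n)ˣ) : ZMod n) ≠ 1) :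
    ¬ IsCircularlyOrderable (PresentedGroup (knotGroupRels n 2)) := by
  rintro ⟨c, h1, h2, h3, h4⟩
  obtain ⟨a, x, han, hrel, hdist, hx⟩ := presented_facts n 2 w hwe hw1
  have h2' : a ^ (2 : ℤ) = a * a := zpow_two a
  rw [h2'] at hrel
  exact CircOrd.key_two ⟨c, h1, h2, h3, h4⟩ n hn a x han hrel hdist hx

/-- None of the virtual knot groups
`G₂ = ⟨x, a | x⁻¹ a x = a⁻¹, a³ = 1⟩`, `G₅ = ⟨x, a | x⁻¹ a x = a⁻¹, a⁵ = 1⟩`,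
`G₆ = ⟨x, a | x⁻¹ a x = a², a⁵ = 1⟩`, `G₈ = ⟨x, a | x⁻¹ a x = a², a⁷ = 1⟩`
is circularly orderable. -/
theorem greenTable_groups_not_circularlyOrderable :
    ¬ IsCircularlyOrderable (PresentedGroup (knotGroupRels 3 (-1))) ∧
    ¬ IsCircularlyOrderable (PresentedGroup (knotGroupRels 5 (-1))) ∧
    ¬ IsCircularlyOrderable (PresentedGroup (knotGroupRels 5 2)) ∧
    ¬ IsCircularlyOrderable (PresentedGroup (knotGroupRels 7 2)) := by
  refine ⟨?_, ?_, ?_, ?_⟩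
  · exact not_co_neg 3 (by norm_num) ⟨1, by norm_num⟩ ⟨2, 2, by decide, by decide⟩
      (by decide) (by decide)
  · exact not_co_neg 5 (by norm_num) ⟨2, by norm_num⟩ ⟨4, 4, by decide, by decide⟩
      (by decide) (by decide)
  · exact not_co_two 5 (by norm_num) ⟨3, 2, by decide, by decide⟩ (by decide) (by decide)
  · exact not_co_two 7 (by norm_num) ⟨4, 2, by decide, by decide⟩ (by decide) (by decide)
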